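/- Let ϑ ∈ I and let ζ be the unique fluid model solution with initial measure ϑ. Then for every T > 0 and every ε > 0 there exists κ > 0 such that max_{1≤k≤K} sup_{t∈[0,T]} sup_{x∈[0,∞)²} ζ_k(t)(C_x^κ) < ε. -/

import Mathlib

open MeasureTheory Set Filter Topology
open scoped ENNReal

noncomputable section

namespace OverloadedFIFO

/-- The complement `G(x) = Γ((x, ∞))` of the cumulative distribution function of `Γ`. -/
def Gk (Γ : MeasureTheory.Measure ℝ) (x : ℝ) : ℝ := (Γ (Set.Ioi x)).toReal

/-- Model data: `K` job classes with arrival rates `lam`, service rates `mu`, and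
deadline (patience) distributions `Γ`, in the overloaded regime `ρ > 1`.  Each `Γ k` is a
Borel probability measure on `[0,∞)` (no mass on negatives), with continuous c.d.f.
(no atoms, in particular `Γ k {0} = 0`) and finite mean. -/
structure Data (K : ℕ) where
  lam : Fin K → ℝ
  mu : Fin K → ℝ
  Γ : Fin K → MeasureTheory.Measure ℝ
  lam_pos : ∀ k, 0 < lam k
  mu_pos : ∀ k, 0 < mu k
  Γ_prob : ∀ k, MeasureTheory.IsProbabilityMeasure (Γ k)
  Γ_null_neg : ∀ k, Γ k (Set.Iio 0) = 0
  Γ_noAtom : ∀ k, ∀ x : ℝ, Γ k {x} = 0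
  Γ_finite_mean : ∀ k, MeasureTheory.Integrable id (Γ k)
  rho_gt_one : 1 < ∑ k, lam k / mu k

instance {K : ℕ} (D : Data K) (k : Fin K) : IsProbabilityMeasure (D.Γ k) := D.Γ_prob k

/-- `ρ_k = λ_k / μ_k`. -/
def Data.rho {K : ℕ} (D : Data K) (k : Fin K) : ℝ := D.lam k / D.mu k

/-- `ρ = Σ_k ρ_k`. -/
def Data.rhoTot {K : ℕ} (D : Data K) : ℝ := ∑ k, D.rho k

/-- A workload fluid model solution: a nonnegative function `w` on `[0,∞)` satisfying
`w(t) = w(0) + Σ_k ρ_k ∫_0^t G_k(w(s)) ds − t` for all `t ≥ 0`. -/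
def IsWorkloadSol {K : ℕ} (D : Data K) (w : ℝ → ℝ) : Prop :=
  (∀ t : ℝ, 0 ≤ t → 0 ≤ w t) ∧
  (∀ k : Fin K, ∀ t : ℝ, 0 ≤ t →
    IntervalIntegrable (fun s => Gk (D.Γ k) (w s)) volume 0 t) ∧
  (∀ t : ℝ, 0 ≤ t →
    w t = w 0 + (∑ k, D.rho k * ∫ s in (0:ℝ)..t, Gk (D.Γ k) (w s)) - t)

/-- `w_l = sup {u ≥ 0 : Σ_k ρ_k G_k(u) > 1}`. -/
def wl {K : ℕ} (D : Data K) : ℝ :=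
  sSup {u : ℝ | 0 ≤ u ∧ 1 < ∑ k, D.rho k * Gk (D.Γ k) u}

/-- `w_u = sup {u ≥ 0 : Σ_k ρ_k G_k(u) ≥ 1}`. -/
def wu {K : ℕ} (D : Data K) : ℝ :=
  sSup {u : ℝ | 0 ≤ u ∧ 1 ≤ ∑ k, D.rho k * Gk (D.Γ k) u}

/-- `d_max = max_k sup {x ≥ 0 : G_k(x) > 0} ∈ (0,∞]`, as an extended nonnegative real. -/
def dmax {K : ℕ} (D : Data K) : ℝ≥0∞ :=
  ⨆ k, sSup (ENNReal.ofReal '' {x : ℝ | 0 ≤ x ∧ 0 < Gk (D.Γ k) x})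

/-- `τ(t) = inf {s ∈ [0,t] : w(s) + s ≥ t}`. -/
def tauF (w : ℝ → ℝ) (t : ℝ) : ℝ := sInf {s : ℝ | 0 ≤ s ∧ s ≤ t ∧ t ≤ w s + s}

/-- The nonnegative quadrant `[0,∞)²`. -/
def Q : Set (ℝ × ℝ) := {p | 0 ≤ p.1 ∧ 0 ≤ p.2}

/-- The shift `B_x = {y ∈ [0,∞)² : y − x ∈ B}` of a set `B ⊆ [0,∞)²`. -/
def shift (B : Set (ℝ × ℝ)) (x : ℝ × ℝ) : Set (ℝ × ℝ) :=
  {y | y ∈ Q ∧ (y.1 - x.1, y.2 - x.2) ∈ B}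

/-- Diagonal shift `B_t = B_{(t,t)}`. -/
def shiftd (B : Set (ℝ × ℝ)) (t : ℝ) : Set (ℝ × ℝ) := shift B (t, t)

/-- The set `C = ([0,∞)×{0}) ∪ ({0}×[0,∞))`. -/
def Cset : Set (ℝ × ℝ) := {p | (0 ≤ p.1 ∧ p.2 = 0) ∨ (p.1 = 0 ∧ 0 ≤ p.2)}

/-- The `κ`-enlargement `B^κ = {x ∈ [0,∞)² : inf_{y ∈ B} ‖x−y‖ < κ}` (Euclidean norm). -/
def enlarge (B : Set (ℝ × ℝ)) (κ : ℝ) : Set (ℝ × ℝ) :=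
  {x | x ∈ Q ∧ ∃ y ∈ B, Real.sqrt ((x.1 - y.1) ^ 2 + (x.2 - y.2) ^ 2) < κ}

/-- `w_ϑ = sup {x ≥ 0 : ϑ_+([x,∞)×[0,∞)) > 0}` for a `K`-tuple `ϑ` of measures on `[0,∞)²`. -/
def wMeas {K : ℕ} (ϑ : Fin K → MeasureTheory.Measure (ℝ × ℝ)) : ℝ :=
  sSup {x : ℝ | 0 ≤ x ∧ 0 < ∑ k, ϑ k (Set.Ici x ×ˢ Set.Ici (0:ℝ))}

/-- Membership in the set `I` of admissible initial measures: each `ϑ k` is a finite Borel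
measure on `[0,∞)²`; (I.1) the superposition charges no corner set `C_x`, `x ∈ [0,∞)²`;
(I.2) `w_ϑ < ∞`; (I.3) `max_k G_k(w_ϑ − ε) > 0` for every `ε > 0`. -/
def MemI {K : ℕ} (D : Data K) (ϑ : Fin K → MeasureTheory.Measure (ℝ × ℝ)) : Prop :=
  (∀ k, IsFiniteMeasure (ϑ k)) ∧
  (∀ k, ϑ k Qᶜ = 0) ∧
  (∀ x ∈ Q, (∑ k, ϑ k (shift Cset x)) = 0) ∧
  BddAbove {x : ℝ | 0 ≤ x ∧ 0 < ∑ k, ϑ k (Set.Ici x ×ˢ Set.Ici (0:ℝ))} ∧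
  (∀ ε : ℝ, 0 < ε → ∃ k, 0 < Gk (D.Γ k) (wMeas ϑ - ε))

/-- `δ⁺_w`: the Dirac measure at `w` if `w > 0`, and the zero measure otherwise. -/
def deltaPlus (w : ℝ) : MeasureTheory.Measure ℝ :=
  if 0 < w then MeasureTheory.Measure.dirac w else 0

instance (w : ℝ) : SFinite (deltaPlus w) := by
  unfold deltaPlus; split_ifs <;> infer_instance

/-- `(δ⁺_w × Γ)(B)`, as a real number. -/
def kern (Γ : MeasureTheory.Measure ℝ) (w : ℝ) (B : Set (ℝ × ℝ)) : ℝ :=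
  (((deltaPlus w).prod Γ) B).toReal

/-- A (measure-valued) fluid model solution with initial measure `ϑ`: a family
`ζ(t) = (ζ_1(t),…,ζ_K(t))` of finite Borel measures on `[0,∞)²` with `ζ(0) = ϑ` satisfying
`ζ_k(t)(B) = ϑ_k(B_t) + λ_k ∫_0^t (δ⁺_{w(s)} × Γ_k)(B_{t−s}) ds` for every Borel
`B ⊆ [0,∞)²` and `t ≥ 0`, where `w` is the (unique) workload fluid model solution with
`w(0) = w_ϑ`. -/
def IsFluidSol {K : ℕ} (D : Data K) (ϑ : Fin K → MeasureTheory.Measure (ℝ × ℝ))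
    (ζ : ℝ → Fin K → MeasureTheory.Measure (ℝ × ℝ)) : Prop :=
  ∃ w : ℝ → ℝ, IsWorkloadSol D w ∧ w 0 = wMeas ϑ ∧
    (∀ t : ℝ, 0 ≤ t → ∀ k, IsFiniteMeasure (ζ t k) ∧ ζ t k Qᶜ = 0) ∧
    (∀ k, ζ 0 k = ϑ k) ∧
    (∀ k, ∀ B : Set (ℝ × ℝ), B ⊆ Q → MeasurableSet B → ∀ t : ℝ, 0 ≤ t →
      IntervalIntegrable (fun s => kern (D.Γ k) (w s) (shiftd B (t - s))) volume 0 t ∧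
      ζ t k B = ϑ k (shiftd B t) +
        ENNReal.ofReal (D.lam k * ∫ s in (0:ℝ)..t, kern (D.Γ k) (w s) (shiftd B (t - s))))

/-- The candidate invariant state `θ^w`:
`θ^w_k(B) = λ_k ∫_0^w Γ_k({p ≥ u : (w−u, p−u) ∈ B}) du`. -/
def thetaW {K : ℕ} (D : Data K) (w : ℝ) (k : Fin K) : MeasureTheory.Measure (ℝ × ℝ) :=
  ENNReal.ofReal (D.lam k) •
    MeasureTheory.Measure.map (fun up : ℝ × ℝ => (w - up.1, up.2 - up.1))
      ((((MeasureTheory.volume.restrict (Set.Ioo (0:ℝ) w))).prod (D.Γ k)).restrict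
        {up : ℝ × ℝ | up.1 ≤ up.2})


/-!
A corner set `C_x^κ`, and each of its diagonal translates, lies in the cross formed by a vertical
and a horizontal strip of half-width `κ`. A finite measure on `ℝ` without atoms gives uniformly
small mass to all intervals of length `2κ` once `κ` is small (tightness plus a compactness
argument), and on a product the same holds for crosses when both marginals are atomless.

By (I.1) the marginals of `ϑ_+` are atomless, which controls the initial term `ϑ_k((C_x^κ)_t)`.
In the arrival term, the `Γ_k`-part of `(δ⁺_{w(s)} × Γ_k)((C_x^κ)_{t-s})` is controlled the
same way, while the Dirac part is at most the indicator that `w(s) + s` lies within `κ` of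
`x_1 + t`. The map `s ↦ w(s) + s` is nondecreasing with derivative `Σ_k ρ_k G_k(w(s))`, and it is
constant on no interval: there this load would vanish, so by (I.3) `w` would lie above `w(0)`,
whereas `w` can never climb across a level at which the load is below `1`. Hence the image of
Lebesgue measure on `[0,T]` under `s ↦ w(s) + s` is atomless too, and the time this map spends
in any window of width `2κ` is uniformly small.
-/

open Metric

theorem exists_pos_forall_measure_ball_lt {α : Type*} [MetricSpace α] [ProperSpace α]
    [MeasurableSpace α] [BorelSpace α] (ν : Measure α) [IsFiniteMeasure ν] [NullSingletonClass ν]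
    {ε : ℝ≥0∞} (hε : 0 < ε) : ∃ κ > 0, ∀ a, ν (ball a κ) < ε := by
  by_contra! h
  choose u hu using fun n : ℕ => h (1 / (n + 1)) (by positivity)
  obtain ⟨η, hη, hηε⟩ := exists_between hε
  obtain ⟨K, hK, hKν⟩ := (isTightMeasureSet_iff_exists_isCompact_measure_compl_le.1
    (isTightMeasureSet_singleton (μ := ν))) η hη
  -- each ball carries more mass than `Kᶜ`, so it meets `K`
  have huK : ∀ n, u n ∈ cthickening 1 K := by
    intro n
    obtain ⟨y, hy, hyK⟩ : (ball (u n) (1 / (n + 1)) ∩ K).Nonempty := by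
      by_contra! hdisj
      refine (hu n).not_gt ((measure_mono fun y hy hyK => ?_).trans_lt ((hKν ν rfl).trans_lt hηε))
      exact hdisj.subset ⟨hy, hyK⟩
    refine mem_cthickening_of_dist_le _ y _ _ hyK (le_of_lt ?_)
    calc dist (u n) y = dist y (u n) := dist_comm _ _
      _ < 1 / (n + 1) := hy
      _ ≤ 1 := by rw [div_le_one (by positivity)]; linarith [n.cast_nonneg (α := ℝ)]
  obtain ⟨b, -, φ, hφ, hlim⟩ := (hK.cthickening (r := 1)).tendsto_subseq huK
  set r : ℕ → ℝ := fun n => dist (u (φ n)) b + 1 / (φ n + 1)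
  have hr : Tendsto r atTop (𝓝 0) := by
    simpa [r] using (tendsto_iff_dist_tendsto_zero.1 hlim).add
      (tendsto_one_div_add_atTop_nhds_zero_nat.comp hφ.tendsto_atTop)
  have hball : ∀ n, ε ≤ ν (cthickening (r n) {b}) := fun n =>
    (hu (φ n)).trans (measure_mono fun y hy => mem_cthickening_of_dist_le y b _ _ rfl
      (by linarith [dist_triangle y (u (φ n)) b, (mem_ball.1 hy).le]))
  have hb :=
    (tendsto_measure_cthickening_of_isCompact (μ := ν) (isCompact_singleton (x := b))).comp hr
  rw [measure_singleton] at hb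
  exact (ge_of_tendsto' hb hball).not_gt hε

def cross {α β : Type*} [PseudoMetricSpace α] [PseudoMetricSpace β] (p : α × β) (κ : ℝ) :
    Set (α × β) :=
  Prod.fst ⁻¹' ball p.1 κ ∪ Prod.snd ⁻¹' ball p.2 κ

theorem cross_mono {α β : Type*} [PseudoMetricSpace α] [PseudoMetricSpace β] (p : α × β)
    {κ κ' : ℝ} (h : κ ≤ κ') : cross p κ ⊆ cross p κ' :=
  union_subset_union (preimage_mono (ball_subset_ball h)) (preimage_mono (ball_subset_ball h))

theorem exists_pos_forall_measure_cross_lt {α β : Type*} [MetricSpace α] [MetricSpace β]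
    [ProperSpace α] [ProperSpace β] [MeasurableSpace α] [BorelSpace α] [MeasurableSpace β]
    [BorelSpace β]
    (μ : Measure (α × β)) [IsFiniteMeasure μ] [NullSingletonClass (μ.map Prod.fst)]
    [NullSingletonClass (μ.map Prod.snd)] {ε : ℝ≥0∞} (hε : 0 < ε) :
    ∃ κ > 0, ∀ p, μ (cross p κ) < ε := by
  obtain ⟨κ₁, hκ₁, h₁⟩ := exists_pos_forall_measure_ball_lt (μ.map Prod.fst)
    (ENNReal.half_pos hε.ne')
  obtain ⟨κ₂, hκ₂, h₂⟩ := exists_pos_forall_measure_ball_lt (μ.map Prod.snd)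
    (ENNReal.half_pos hε.ne')
  refine ⟨min κ₁ κ₂, lt_min hκ₁ hκ₂, fun p => ?_⟩
  calc μ (cross p (min κ₁ κ₂))
      ≤ μ.map Prod.fst (ball p.1 κ₁) + μ.map Prod.snd (ball p.2 κ₂) := by
        rw [Measure.map_apply measurable_fst measurableSet_ball,
          Measure.map_apply measurable_snd measurableSet_ball]
        exact (measure_union_le _ _).trans (add_le_add
          (measure_mono (preimage_mono (ball_subset_ball (min_le_left _ _))))
          (measure_mono (preimage_mono (ball_subset_ball (min_le_right _ _)))))
    _ < ε / 2 + ε / 2 := ENNReal.add_lt_add (h₁ _) (h₂ _)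
    _ = ε := ENNReal.add_halves ε

theorem measurableSet_enlarge (B : Set (ℝ × ℝ)) (κ : ℝ) : MeasurableSet (enlarge B κ) := by
  have hQ : IsClosed Q := (isClosed_le continuous_const continuous_fst).inter
    (isClosed_le continuous_const continuous_snd)
  have hopen : IsOpen {x : ℝ × ℝ | ∃ y ∈ B, √((x.1 - y.1) ^ 2 + (x.2 - y.2) ^ 2) < κ} := by
    have : {x : ℝ × ℝ | ∃ y ∈ B, √((x.1 - y.1) ^ 2 + (x.2 - y.2) ^ 2) < κ} =
        ⋃ y ∈ B, {x : ℝ × ℝ | √((x.1 - y.1) ^ 2 + (x.2 - y.2) ^ 2) < κ} := by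
      ext; simp
    rw [this]
    exact isOpen_biUnion fun y _ => isOpen_lt (by fun_prop) continuous_const
  exact hQ.measurableSet.inter hopen.measurableSet

theorem shiftd_enlarge_subset_cross (x : ℝ × ℝ) (κ u : ℝ) :
    shiftd (enlarge (shift Cset x) κ) u ⊆ cross (x.1 + u, x.2 + u) κ := by
  rintro y ⟨-, -, p, ⟨-, hp⟩, hd⟩
  simp only [cross, mem_union, mem_preimage, mem_ball, Real.dist_eq]
  rcases hp with ⟨-, hp₂⟩ | ⟨hp₁, -⟩
  · right
    rw [show y.2 - (x.2 + u) = y.2 - u - p.2 by linarith]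
    exact (Real.abs_le_sqrt (le_add_of_nonneg_left (sq_nonneg _))).trans_lt hd
  · left
    rw [show y.1 - (x.1 + u) = y.1 - u - p.1 by linarith]
    exact (Real.abs_le_sqrt (le_add_of_nonneg_right (sq_nonneg _))).trans_lt hd

section Corner

variable {μ : Measure (ℝ × ℝ)} (hQ : μ Qᶜ = 0) (hC : ∀ x ∈ Q, μ (shift Cset x) = 0)
include hQ hC

theorem nullSingletonClass_map_fst : NullSingletonClass (μ.map Prod.fst) := by
  refine ⟨fun a => ?_⟩
  rw [Measure.map_apply measurable_fst (measurableSet_singleton a)]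
  refine measure_mono_null (fun y (hy : y.1 = a) => ?_)
    (measure_union_null (hC (|a|, 0) ⟨abs_nonneg a, le_rfl⟩) hQ)
  by_cases hyQ : y ∈ Q
  · have ha : |a| = a := abs_of_nonneg (hy ▸ hyQ.1)
    exact Or.inl ⟨hyQ, Or.inr ⟨by simp [ha, hy], by simpa using hyQ.2⟩⟩
  · exact Or.inr hyQ

theorem nullSingletonClass_map_snd : NullSingletonClass (μ.map Prod.snd) := by
  refine ⟨fun a => ?_⟩
  rw [Measure.map_apply measurable_snd (measurableSet_singleton a)]
  refine measure_mono_null (fun y (hy : y.2 = a) => ?_)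
    (measure_union_null (hC (0, |a|) ⟨le_rfl, abs_nonneg a⟩) hQ)
  by_cases hyQ : y ∈ Q
  · have ha : |a| = a := abs_of_nonneg (hy ▸ hyQ.2)
    exact Or.inl ⟨hyQ, Or.inl ⟨by simpa using hyQ.1, by simp [ha, hy]⟩⟩
  · exact Or.inr hyQ

end Corner

theorem deltaPlus_le_indicator (w : ℝ) {I : Set ℝ} (hI : MeasurableSet I) :
    deltaPlus w I ≤ I.indicator 1 w := by
  unfold deltaPlus
  split_ifs
  · exact (Measure.dirac_apply' w hI).le
  · exact zero_le

theorem deltaPlus_prod_cross_le (Γ : Measure ℝ) [IsProbabilityMeasure Γ] (w : ℝ) (p : ℝ × ℝ)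
    (κ : ℝ) : (deltaPlus w).prod Γ (cross p κ) ≤ (ball p.1 κ).indicator 1 w + Γ (ball p.2 κ) := by
  calc (deltaPlus w).prod Γ (cross p κ)
      ≤ deltaPlus w (ball p.1 κ) * Γ univ + deltaPlus w univ * Γ (ball p.2 κ) := by
        rw [← Measure.prod_prod, ← Measure.prod_prod, prod_univ, univ_prod]
        exact measure_union_le _ _
    _ ≤ (ball p.1 κ).indicator 1 w * 1 + 1 * Γ (ball p.2 κ) := by
        rw [measure_univ]
        gcongr
        · exact deltaPlus_le_indicator w measurableSet_ball
        · simpa using deltaPlus_le_indicator w MeasurableSet.univ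
    _ = _ := by rw [mul_one, one_mul]

/-- The load of the jobs whose patience exceeds the workload `v`; a workload fluid model
solution satisfies `w' = D.effectiveLoad w - 1`. -/
def Data.effectiveLoad {K : ℕ} (D : Data K) (v : ℝ) : ℝ := ∑ k, D.rho k * Gk (D.Γ k) v

theorem Gk_antitone (Γ : Measure ℝ) [IsFiniteMeasure Γ] : Antitone (Gk Γ) := fun _ _ h =>
  ENNReal.toReal_mono (measure_ne_top _ _) (measure_mono (Ioi_subset_Ioi h))

section Workload

variable {K : ℕ} {D : Data K}

theorem Data.rho_pos (D : Data K) (k : Fin K) : 0 < D.rho k :=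
  div_pos (D.lam_pos k) (D.mu_pos k)

theorem Data.effectiveLoad_nonneg (D : Data K) (v : ℝ) : 0 ≤ D.effectiveLoad v :=
  Finset.sum_nonneg fun k _ => mul_nonneg (D.rho_pos k).le ENNReal.toReal_nonneg

theorem Data.effectiveLoad_antitone (D : Data K) : Antitone D.effectiveLoad := fun _ _ h =>
  Finset.sum_le_sum fun k _ => mul_le_mul_of_nonneg_left (Gk_antitone _ h) (D.rho_pos k).le

theorem MemI.effectiveLoad_pos {ϑ : Fin K → Measure (ℝ × ℝ)} (hϑ : MemI D ϑ) {v : ℝ}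
    (hv : v < wMeas ϑ) : 0 < D.effectiveLoad v := by
  obtain ⟨k, hk⟩ := hϑ.2.2.2.2 (wMeas ϑ - v) (sub_pos.2 hv)
  rw [sub_sub_cancel] at hk
  exact Finset.sum_pos' (fun j _ => mul_nonneg (D.rho_pos j).le ENNReal.toReal_nonneg)
    ⟨k, Finset.mem_univ k, mul_pos (D.rho_pos k) hk⟩

variable {w : ℝ → ℝ} (hw : IsWorkloadSol D w)
include hw

theorem IsWorkloadSol.intervalIntegrable {a b : ℝ} (ha : 0 ≤ a) (hb : 0 ≤ b) :
    IntervalIntegrable (fun s => D.effectiveLoad (w s)) volume a b := by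
  have := IntervalIntegrable.sum Finset.univ fun k _ =>
    ((hw.2.1 k a ha).symm.trans (hw.2.1 k b hb)).const_mul (D.rho k)
  simp only [Finset.sum_fn] at this
  exact this

theorem IsWorkloadSol.add_sub_add_eq_integral {a b : ℝ} (ha : 0 ≤ a) (hb : 0 ≤ b) :
    w b + b - (w a + a) = ∫ s in a..b, D.effectiveLoad (w s) := by
  have hG : ∀ k, (∫ s in (0:ℝ)..b, Gk (D.Γ k) (w s)) - ∫ s in (0:ℝ)..a, Gk (D.Γ k) (w s) =
      ∫ s in a..b, Gk (D.Γ k) (w s) := fun k =>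
    intervalIntegral.integral_interval_sub_left (hw.2.1 k b hb) (hw.2.1 k a ha)
  rw [hw.2.2 b hb, hw.2.2 a ha]
  unfold Data.effectiveLoad
  rw [intervalIntegral.integral_finsetSum fun k _ =>
    ((hw.2.1 k a ha).symm.trans (hw.2.1 k b hb)).const_mul (D.rho k)]
  simp only [intervalIntegral.integral_const_mul, ← hG, mul_sub, Finset.sum_sub_distrib]
  ring

theorem IsWorkloadSol.monotoneOn_add : MonotoneOn (fun s => w s + s) (Ici 0) :=
  fun a ha b hb hab => sub_nonneg.1 <| by
    rw [hw.add_sub_add_eq_integral ha hb]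
    exact intervalIntegral.integral_nonneg hab fun s _ => D.effectiveLoad_nonneg _

theorem IsWorkloadSol.continuousOn {T : ℝ} (hT : 0 ≤ T) : ContinuousOn w (Icc 0 T) := by
  have hprim := intervalIntegral.continuousOn_primitive_interval'
    (hw.intervalIntegrable le_rfl hT) (left_mem_uIcc (a := 0) (b := T))
  rw [uIcc_of_le hT] at hprim
  have hcont : ContinuousOn (fun t => w 0 + (∫ s in (0:ℝ)..t, D.effectiveLoad (w s)) - t)
      (Icc 0 T) := by
    fun_prop
  refine hcont.congr fun t ht => ?_
  linarith [hw.add_sub_add_eq_integral le_rfl ht.1]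

theorem IsWorkloadSol.le_of_effectiveLoad_lt_one {v s₀ s₁ : ℝ} (hv : D.effectiveLoad v < 1)
    (hs₁ : 0 ≤ s₁) (hs : s₁ ≤ s₀) (hw₁ : w s₁ ≤ v) : w s₀ ≤ v := by
  by_contra! hv₀
  set S := Icc s₁ s₀ ∩ w ⁻¹' Iic v
  have hS : IsCompact S := isCompact_Icc.of_isClosed_subset
    (ContinuousOn.preimage_isClosed_of_isClosed
      ((hw.continuousOn (hs₁.trans hs)).mono (Icc_subset_Icc_left hs₁)) isClosed_Icc isClosed_Iic)
    inter_subset_left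
  obtain ⟨⟨hs₁s, hss₀⟩, hws : w (sSup S) ≤ v⟩ := hS.sSup_mem ⟨s₁, ⟨left_mem_Icc.2 hs, hw₁⟩⟩
  set s := sSup S
  have habove : ∀ r ∈ Ioo s s₀, v < w r := fun r hr => by
    by_contra! h
    exact hr.1.not_ge (le_csSup hS.bddAbove ⟨⟨hs₁s.trans hr.1.le, hr.2.le⟩, h⟩)
  have hlt : s < s₀ := hss₀.lt_of_ne fun h => (h ▸ hv₀).not_ge hws
  have hs0 : 0 ≤ s := hs₁.trans hs₁s
  have hint : ∫ r in s..s₀, D.effectiveLoad (w r) ≤ D.effectiveLoad v * (s₀ - s) := by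
    calc ∫ r in s..s₀, D.effectiveLoad (w r) ≤ ∫ _ in s..s₀, D.effectiveLoad v :=
          intervalIntegral.integral_mono_on_of_le_Ioo hlt.le
            (hw.intervalIntegrable hs0 (hs0.trans hlt.le)) intervalIntegrable_const
            fun r hr => D.effectiveLoad_antitone (habove r hr).le
      _ = _ := by rw [intervalIntegral.integral_const, smul_eq_mul, mul_comm]
  have := hw.add_sub_add_eq_integral hs0 (hs0.trans hlt.le)
  nlinarith [mul_pos (sub_pos.2 hv) (sub_pos.2 hlt)]

theorem IsWorkloadSol.effectiveLoad_eq_zero_of_eq {a b : ℝ} (ha : 0 ≤ a) (hab : a < b)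
    (heq : w a + a = w b + b) : D.effectiveLoad (w a) = 0 := by
  have hb : 0 ≤ b := ha.trans hab.le
  have hconst : ∀ s ∈ Icc a b, w s + s = w a + a := fun s hs =>
    le_antisymm (heq ▸ hw.monotoneOn_add (ha.trans hs.1) hb hs.2)
      (hw.monotoneOn_add ha (ha.trans hs.1) hs.1)
  have hle : D.effectiveLoad (w a) * (b - a) ≤ 0 := by
    calc D.effectiveLoad (w a) * (b - a) = ∫ _ in a..b, D.effectiveLoad (w a) := by
          rw [intervalIntegral.integral_const, smul_eq_mul, mul_comm]
      _ ≤ ∫ s in a..b, D.effectiveLoad (w s) :=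
          intervalIntegral.integral_mono_on hab.le intervalIntegrable_const
            (hw.intervalIntegrable ha hb)
            fun s hs => D.effectiveLoad_antitone (by linarith [hconst s hs, hs.1])
      _ = 0 := by rw [← hw.add_sub_add_eq_integral ha hb, heq, sub_self]
  exact le_antisymm (nonpos_of_mul_nonpos_left hle (sub_pos.2 hab)) (D.effectiveLoad_nonneg _)

theorem IsWorkloadSol.subsingleton_levelSet (hpos : ∀ v < w 0, 0 < D.effectiveLoad v) (c : ℝ) :
    {s | 0 ≤ s ∧ w s + s = c}.Subsingleton := by
  rintro a ⟨ha, hac⟩ b ⟨hb, hbc⟩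
  by_contra hne
  wlog hab : a < b generalizing a b
  · exact this hb hbc ha hac (Ne.symm hne) ((not_lt.1 hab).lt_of_ne (Ne.symm hne))
  obtain ⟨m, ham, hmb⟩ := exists_between hab
  have hm0 : 0 ≤ m := ha.trans ham.le
  have hm : w m + m = c := le_antisymm (hbc ▸ hw.monotoneOn_add hm0 hb hmb.le)
    (hac ▸ hw.monotoneOn_add ha hm0 ham.le)
  have hload : D.effectiveLoad (w m) = 0 :=
    hw.effectiveLoad_eq_zero_of_eq hm0 hmb (hm.trans hbc.symm)
  have hw0 : w 0 ≤ w m := not_lt.1 fun h => (hpos _ h).ne' hload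
  have := hw.le_of_effectiveLoad_lt_one (hload ▸ one_pos) le_rfl ha hw0
  linarith

theorem IsWorkloadSol.aemeasurable_add {T : ℝ} (hT : 0 ≤ T) :
    AEMeasurable (fun s => w s + s) (volume.restrict (Icc 0 T)) :=
  ((hw.continuousOn hT).add continuousOn_id).aemeasurable measurableSet_Icc

theorem IsWorkloadSol.nullSingletonClass_map (hpos : ∀ v < w 0, 0 < D.effectiveLoad v)
    {T : ℝ} (hT : 0 ≤ T) :
    NullSingletonClass ((volume.restrict (Icc 0 T)).map fun s => w s + s) := by
  refine ⟨fun c => ?_⟩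
  rw [Measure.map_apply_of_aemeasurable (hw.aemeasurable_add hT) (measurableSet_singleton c),
    Measure.restrict_apply' measurableSet_Icc]
  refine measure_mono_null (fun s hs => ?_)
    ((hw.subsingleton_levelSet hpos c).measure_zero volume)
  exact ⟨hs.2.1, hs.1⟩

theorem IsWorkloadSol.exists_pos_lintegral_cross_lt (hpos : ∀ v < w 0, 0 < D.effectiveLoad v)
    {T : ℝ} (hT : 0 ≤ T) {ε : ℝ≥0∞} (hε : 0 < ε) :
    ∃ κ > 0, ∀ k, ∀ t ≤ T, ∀ a b : ℝ,
      ∫⁻ s in Ioc 0 t, (deltaPlus (w s)).prod (D.Γ k) (cross (a - s, b - s) κ) < ε := by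
  have := hw.nullSingletonClass_map hpos hT
  have : NullSingletonClass (∑ k, D.Γ k) :=
    ⟨fun a => by simp [Measure.finsetSum_apply, D.Γ_noAtom]⟩
  obtain ⟨η, hη, hηT⟩ := ENNReal.exists_pos_mul_lt (ENNReal.ofReal_ne_top (r := T))
    (ENNReal.half_pos hε.ne').ne'
  obtain ⟨κ₁, hκ₁, h₁⟩ := exists_pos_forall_measure_ball_lt
    ((volume.restrict (Icc 0 T)).map fun s => w s + s) (ENNReal.half_pos hε.ne')
  obtain ⟨κ₂, hκ₂, h₂⟩ := exists_pos_forall_measure_ball_lt (∑ k, D.Γ k) hη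
  refine ⟨min κ₁ κ₂, lt_min hκ₁ hκ₂, fun k t ht a b => ?_⟩
  set E := (fun s => w s + s) ⁻¹' ball a κ₁
  -- the Dirac mass sits in the vertical strip only while `w s + s` is within `κ` of `a`
  have hpt : ∀ s, (deltaPlus (w s)).prod (D.Γ k) (cross (a - s, b - s) (min κ₁ κ₂)) ≤
      E.indicator 1 s + η := by
    intro s
    refine (deltaPlus_prod_cross_le _ _ _ _).trans (add_le_add ?_ ?_)
    · by_cases h : w s ∈ ball (a - s) (min κ₁ κ₂)
      · have hE : s ∈ E := by
          have := (mem_ball.1 h).trans_le (min_le_left _ _)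
          rwa [Real.dist_eq, sub_sub_eq_add_sub] at this
        simp [indicator_of_mem h, indicator_of_mem hE]
      · simp [indicator_of_notMem h]
    · calc D.Γ k (ball (b - s) (min κ₁ κ₂)) ≤ (∑ j, D.Γ j) (ball (b - s) κ₂) := by
            rw [Measure.finsetSum_apply]
            exact (measure_mono (ball_subset_ball (min_le_right _ _))).trans
              (Finset.single_le_sum (f := fun j => D.Γ j _) (fun j _ => zero_le)
                (Finset.mem_univ k))
        _ ≤ η := (h₂ _).le
  calc ∫⁻ s in Ioc 0 t, (deltaPlus (w s)).prod (D.Γ k) (cross (a - s, b - s) (min κ₁ κ₂))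
      ≤ ∫⁻ s in Ioc 0 t, (E.indicator 1 s + η) := lintegral_mono hpt
    _ = (∫⁻ s in Ioc 0 t, E.indicator 1 s) + η * volume (Ioc 0 t) := by
        rw [lintegral_add_right _ measurable_const, setLIntegral_const]
    _ ≤ (volume.restrict (Icc 0 T)).map (fun s => w s + s) (ball a κ₁) +
        η * ENNReal.ofReal T := by
        gcongr
        · calc ∫⁻ s in Ioc 0 t, E.indicator 1 s ≤ 1 * volume.restrict (Ioc 0 t) E :=
                lintegral_indicator_const_le E 1
            _ ≤ volume.restrict (Icc 0 T) E := by
                rw [one_mul]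
                exact Measure.restrict_mono (Ioc_subset_Icc_self.trans (Icc_subset_Icc_right ht))
                  le_rfl E
            _ ≤ _ := Measure.le_map_apply (hw.aemeasurable_add hT) _
        · rw [Real.volume_Ioc]
          exact ENNReal.ofReal_le_ofReal (by linarith)
    _ < ε / 2 + ε / 2 := ENNReal.add_lt_add (h₁ a) hηT
    _ = ε := ENNReal.add_halves ε

end Workload

theorem MemI.exists_pos_measure_cross_lt {K : ℕ} {D : Data K}
    {ϑ : Fin K → Measure (ℝ × ℝ)} (hϑ : MemI D ϑ) {ε : ℝ≥0∞} (hε : 0 < ε) :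
    ∃ κ > 0, ∀ k p, ϑ k (cross p κ) < ε := by
  have := hϑ.1
  set Θ := ∑ k, ϑ k
  have hΘ : ∀ s, Θ s = ∑ k, ϑ k s := Measure.finsetSum_apply _ _
  have hΘQ : Θ Qᶜ = 0 := (hΘ _).trans (Finset.sum_eq_zero fun k _ => hϑ.2.1 k)
  have hΘC : ∀ x ∈ Q, Θ (shift Cset x) = 0 := fun x hx => (hΘ _).trans (hϑ.2.2.1 x hx)
  have := nullSingletonClass_map_fst hΘQ hΘC
  have := nullSingletonClass_map_snd hΘQ hΘC
  obtain ⟨κ, hκ, h⟩ := exists_pos_forall_measure_cross_lt Θ hε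
  refine ⟨κ, hκ, fun k p => lt_of_le_of_lt ?_ (h p)⟩
  rw [hΘ]
  exact Finset.single_le_sum (f := fun j => ϑ j (cross p κ)) (fun j _ => zero_le)
    (Finset.mem_univ k)

theorem ofReal_integral_kern_le (Γ : Measure ℝ) (w : ℝ → ℝ) (B : ℝ → Set (ℝ × ℝ)) {t : ℝ}
    (ht : 0 ≤ t) (hint : IntervalIntegrable (fun s => kern Γ (w s) (B s)) volume 0 t) :
    ENNReal.ofReal (∫ s in 0..t, kern Γ (w s) (B s)) ≤
      ∫⁻ s in Ioc 0 t, (deltaPlus (w s)).prod Γ (B s) := by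
  rw [intervalIntegral.integral_of_le ht,
    ofReal_integral_eq_lintegral_ofReal hint.1 (ae_of_all _ fun _ => ENNReal.toReal_nonneg)]
  exact lintegral_mono fun s => ENNReal.ofReal_toReal_le

/-- For `ϑ ∈ I` and the fluid model solution `ζ` with initial measure `ϑ`,
for every `T > 0` and `ε > 0` there exists `κ > 0` such that
`max_k sup_{t∈[0,T]} sup_{x∈[0,∞)²} ζ_k(t)(C_x^κ) < ε`. -/
theorem fluid_corner_enlargement_small {K : ℕ} (D : Data K)
    (ϑ : Fin K → MeasureTheory.Measure (ℝ × ℝ)) (hϑ : MemI D ϑ)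
    (ζ : ℝ → Fin K → MeasureTheory.Measure (ℝ × ℝ)) (hζ : IsFluidSol D ϑ ζ) :
    ∀ T : ℝ, 0 < T → ∀ ε : ℝ, 0 < ε → ∃ κ : ℝ, 0 < κ ∧
      ∀ k, ∀ t ∈ Set.Icc (0:ℝ) T, ∀ x ∈ Q,
        ζ t k (enlarge (shift Cset x) κ) < ENNReal.ofReal ε := by
  intro T hT ε hε
  obtain ⟨w, hw, hw0, -, -, hζeq⟩ := hζ
  have hε₀ : 0 < ENNReal.ofReal ε / 2 := ENNReal.half_pos (ENNReal.ofReal_pos.2 hε).ne'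
  obtain ⟨κ₁, hκ₁, hinit⟩ := hϑ.exists_pos_measure_cross_lt hε₀
  obtain ⟨η, hη, hηΛ⟩ :=
    ENNReal.exists_pos_mul_lt (ENNReal.ofReal_ne_top (r := ∑ k, D.lam k)) hε₀.ne'
  obtain ⟨κ₂, hκ₂, harr⟩ := hw.exists_pos_lintegral_cross_lt
    (fun v hv => hϑ.effectiveLoad_pos (hw0 ▸ hv)) hT.le hη
  refine ⟨min κ₁ κ₂, lt_min hκ₁ hκ₂, fun k t ht x _ => ?_⟩
  have hcross : ∀ κ ≥ min κ₁ κ₂, ∀ u,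
      shiftd (enlarge (shift Cset x) (min κ₁ κ₂)) u ⊆ cross (x.1 + u, x.2 + u) κ :=
    fun κ hκ u => (shiftd_enlarge_subset_cross x _ u).trans (cross_mono _ hκ)
  obtain ⟨hint, hζB⟩ := hζeq k _ (fun _ hy => hy.1) (measurableSet_enlarge _ _) t ht.1
  rw [hζB, ENNReal.ofReal_mul (D.lam_pos k).le, ← ENNReal.add_halves (ENNReal.ofReal ε)]
  refine ENNReal.add_lt_add
    ((measure_mono (hcross κ₁ (min_le_left _ _) t)).trans_lt (hinit k _)) ?_
  calc _ ≤ ENNReal.ofReal (∑ j, D.lam j) * η := by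
        gcongr
        · exact Finset.single_le_sum (fun j _ => (D.lam_pos j).le) (Finset.mem_univ k)
        refine (ofReal_integral_kern_le _ _ _ ht.1 hint).trans ((lintegral_mono fun s =>
          measure_mono ?_).trans (harr k t ht.2 (x.1 + t) (x.2 + t)).le)
        simpa only [add_sub_assoc] using hcross κ₂ (min_le_right _ _) (t - s)
    _ < _ := by rwa [mul_comm]

end OverloadedFIFO
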